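/- Let (R, m) be a finite commutative local ring with identity 1 ≠ 0 and maximal ideal m ≠ {0}. If m² ≠ {0}, then 2 ≤ α(Γ(R)) ≤ |Z*(R)| − |Ann(Z(R)) \ {0}|, where Ann(Z(R)) = {r ∈ R : rz = 0 for all z ∈ Z(R)}. -/

import Mathlib

/-- The zero-divisor graph `Γ(R)`: vertices are the nonzero zero-divisors of `R`,
with distinct vertices `x`, `y` adjacent iff `x * y = 0`. -/
def zdvGraph (R : Type*) [CommRing R] :
    SimpleGraph {x : R // x ≠ 0 ∧ ∃ y ≠ 0, x * y = 0} where
  Adj x y := x ≠ y ∧ (x : R) * y = 0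
  symm := ⟨fun x y ⟨hxy, h⟩ => ⟨hxy.symm, by rwa [mul_comm]⟩⟩
  loopless := ⟨fun x ⟨h, _⟩ => h rfl⟩

/-- The independence number of a simple graph: the maximum cardinality of a set of
pairwise non-adjacent vertices. -/
noncomputable def indepNum {V : Type*} (G : SimpleGraph V) : ℕ :=
  sSup {n | ∃ s : Finset V, (s : Set V).Pairwise (fun a b => ¬ G.Adj a b) ∧ s.card = n}

/-!
Since `𝔪² ≠ 0` there are distinct `u, v ∈ 𝔪` with `u * v ≠ 0`: if the only witness is a square
`a * a`, pair `a` with `a * (1 - a)` instead, which works because `1 - a` is a unit. In a finite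
ring the elements of `𝔪` are zero-divisors, so `{u, v}` is an independent set of `Γ(R)`.
A nonzero element of `Ann(Z(R))` is adjacent to every other vertex, so an independent set with two
or more vertices avoids `Ann(Z(R)) \ {0}`; one with at most one vertex is bounded because `u` and
`v` already lie outside `Ann(Z(R))`.
-/

open Finset

lemma indepNum_eq_simpleGraph_indepNum {V : Type*} (G : SimpleGraph V) :
    indepNum G = G.indepNum := by
  simp only [indepNum, SimpleGraph.indepNum, SimpleGraph.isNIndepSet_iff]

lemma SimpleGraph.IsIndepSet.notMem_of_forall_adj {V : Type*} {G : SimpleGraph V} {s : Set V}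
    {x : V} (hs : G.IsIndepSet s) (hst : s.Nontrivial) (hx : ∀ y, y ≠ x → G.Adj x y) :
    x ∉ s := by
  intro hxs
  obtain ⟨y, hys, hyx⟩ := hst.exists_ne x
  exact hs hxs hys hyx.symm (hx y hyx)

lemma exists_mul_eq_zero_of_not_isUnit {R : Type*} [CommRing R] [Finite R] {x : R}
    (hx : ¬IsUnit x) : ∃ y ≠ 0, x * y = 0 := by
  rw [isUnit_iff_mem_nonZeroDivisors_of_finite, notMem_nonZeroDivisors_iff_left] at hx
  obtain ⟨y, hxy, hy⟩ := hx
  exact ⟨y, hy, hxy⟩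

lemma IsLocalRing.exists_ne_mul_ne_zero_of_maximalIdeal_sq_ne_bot {R : Type*} [CommRing R]
    [IsLocalRing R] (h : maximalIdeal R ^ 2 ≠ ⊥) :
    ∃ u ∈ maximalIdeal R, ∃ v ∈ maximalIdeal R, u ≠ v ∧ u * v ≠ 0 := by
  obtain ⟨a, ha, b, hb, hab⟩ : ∃ a ∈ maximalIdeal R, ∃ b ∈ maximalIdeal R, a * b ≠ 0 := by
    by_contra! h0
    exact h (by rw [pow_two, ← le_bot_iff]; exact Ideal.mul_le.mpr h0)
  by_cases hba : a = b
  · subst hba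
    have hunit : IsUnit (1 - a) := isUnit_one_sub_self_of_mem_nonunits a ha
    refine ⟨a, ha, a * (1 - a), Ideal.mul_mem_right _ _ ha, fun h => hab ?_, ?_⟩
    · linear_combination h
    · rwa [← mul_assoc, Ne, hunit.mul_left_eq_zero]
  · exact ⟨a, ha, b, hb, hba, hab⟩

def annZeroDivisors (R : Type*) [CommRing R] : Set R :=
  {r | ∀ z : R, (∃ y ≠ 0, z * y = 0) → r * z = 0}

section ZeroDivisorGraph

variable {R : Type*} [CommRing R]

lemma annZeroDivisors_diff_zero_subset {u : R} (hu0 : u ≠ 0) (hu : ∃ y ≠ 0, u * y = 0) :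
    annZeroDivisors R \ {0} ⊆ {x : R | x ≠ 0 ∧ ∃ y ≠ 0, x * y = 0} :=
  fun _ ⟨hr, hr0⟩ => ⟨hr0, u, hu0, hr u hu⟩

lemma zdvGraph_adj_of_mem_annZeroDivisors {x y : {x : R // x ≠ 0 ∧ ∃ y ≠ 0, x * y = 0}}
    (hx : (x : R) ∈ annZeroDivisors R) (hyx : y ≠ x) : (zdvGraph R).Adj x y :=
  ⟨hyx.symm, hx y y.2.2⟩

lemma card_le_ncard_diff_annZeroDivisors_of_isIndepSet [Finite R]
    {s : Finset {x : R // x ≠ 0 ∧ ∃ y ≠ 0, x * y = 0}}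
    (hs : (zdvGraph R).IsIndepSet s) (hst : s.Nontrivial) :
    #s ≤ ({x : R | x ≠ 0 ∧ ∃ y ≠ 0, x * y = 0} \ (annZeroDivisors R \ {0})).ncard := by
  rw [← card_map (Function.Embedding.subtype _), ← Set.ncard_coe_finset]
  refine Set.ncard_le_ncard ?_
  rw [coe_map]
  rintro _ ⟨x, hxs, rfl⟩
  exact ⟨x.2, fun hA => hs.notMem_of_forall_adj hst
    (fun _ hyx => zdvGraph_adj_of_mem_annZeroDivisors hA.1 hyx) hxs⟩

lemma two_le_indepNum_zdvGraph [Finite R] {u v : R} (hu : u ≠ 0 ∧ ∃ y ≠ 0, u * y = 0)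
    (hv : v ≠ 0 ∧ ∃ y ≠ 0, v * y = 0) (huv : u ≠ v) (huv0 : u * v ≠ 0) :
    2 ≤ (zdvGraph R).indepNum := by
  classical
  have hpair : (zdvGraph R).IsIndepSet
      ({⟨u, hu⟩, ⟨v, hv⟩} : Finset {x : R // x ≠ 0 ∧ ∃ y ≠ 0, x * y = 0}) := by
    rw [coe_pair]
    exact Set.pairwise_pair.mpr fun _ => ⟨fun h => huv0 h.2, fun h => huv0 (mul_comm u v ▸ h.2)⟩
  exact (card_pair fun h => huv (congrArg Subtype.val h)).symm.trans_le hpair.card_le_indepNum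

lemma indepNum_zdvGraph_le [Finite R]
    (h : 2 ≤ ({x : R | x ≠ 0 ∧ ∃ y ≠ 0, x * y = 0} \ (annZeroDivisors R \ {0})).ncard) :
    (zdvGraph R).indepNum ≤
      ({x : R | x ≠ 0 ∧ ∃ y ≠ 0, x * y = 0} \ (annZeroDivisors R \ {0})).ncard := by
  obtain ⟨s, hs⟩ := (zdvGraph R).exists_isNIndepSet_indepNum
  rw [← hs.card_eq]
  rcases le_or_gt #s 1 with hle | hlt
  · omega
  · exact card_le_ncard_diff_annZeroDivisors_of_isIndepSet hs.isIndepSet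
      (one_lt_card_iff_nontrivial.mp hlt)

end ZeroDivisorGraph

theorem stmt16_general (R : Type*) [CommRing R] [IsLocalRing R] [Finite R]
    (hm2 : (IsLocalRing.maximalIdeal R) ^ 2 ≠ ⊥) :
    2 ≤ indepNum (zdvGraph R) ∧
      indepNum (zdvGraph R) ≤
        Nat.card {x : R // x ≠ 0 ∧ ∃ y ≠ 0, x * y = 0} -
          ({r : R | ∀ z : R, (∃ y ≠ 0, z * y = 0) → r * z = 0} \ {0}).ncard := by
  obtain ⟨u, hu, v, hv, huv, huv0⟩ :=
    IsLocalRing.exists_ne_mul_ne_zero_of_maximalIdeal_sq_ne_bot hm2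
  have huZ : u ≠ 0 ∧ ∃ y ≠ 0, u * y = 0 :=
    ⟨left_ne_zero_of_mul huv0, exists_mul_eq_zero_of_not_isUnit hu⟩
  have hvZ : v ≠ 0 ∧ ∃ y ≠ 0, v * y = 0 :=
    ⟨right_ne_zero_of_mul huv0, exists_mul_eq_zero_of_not_isUnit hv⟩
  have huA : u ∉ annZeroDivisors R := fun h => huv0 (h v hvZ.2)
  have hvA : v ∉ annZeroDivisors R := fun h => huv0 (mul_comm v u ▸ h u huZ.2)
  rw [indepNum_eq_simpleGraph_indepNum]
  refine ⟨two_le_indepNum_zdvGraph huZ hvZ huv huv0, ?_⟩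
  calc (zdvGraph R).indepNum
      ≤ ({x : R | x ≠ 0 ∧ ∃ y ≠ 0, x * y = 0} \ (annZeroDivisors R \ {0})).ncard :=
        indepNum_zdvGraph_le <| (Set.one_lt_ncard).mpr
          ⟨u, ⟨huZ, fun h => huA h.1⟩, v, ⟨hvZ, fun h => hvA h.1⟩, huv⟩
    _ = _ := by rw [Set.ncard_sdiff (annZeroDivisors_diff_zero_subset huZ.1 huZ.2)]; rfl

theorem stmt16 (R : Type*) [CommRing R] [IsLocalRing R] [Finite R]
    (hm : IsLocalRing.maximalIdeal R ≠ ⊥)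
    (hm2 : (IsLocalRing.maximalIdeal R) ^ 2 ≠ ⊥) :
    2 ≤ indepNum (zdvGraph R) ∧
      indepNum (zdvGraph R) ≤
        Nat.card {x : R // x ≠ 0 ∧ ∃ y ≠ 0, x * y = 0} -
          ({r : R | ∀ z : R, (∃ y ≠ 0, z * y = 0) → r * z = 0} \ {0}).ncard :=
  stmt16_general R hm2
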